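/- arXiv:1904.08316 — 2 statements merged into one kernel-verified Lean document; each statement's English description precedes it below -/
import Mathlib

section
/- Let $N \ge 1$, $s \in (0,1)$, and $0 < \vartheta < N-2s$. There exists a constant $C > 0$ such that for all $y \in \mathbb{R}^N$, $$\int_{\mathbb{R}^N} \frac{1}{|y-z|^{N-2s}} \cdot \frac{1}{(1+|z|)^{2s+\vartheta}}\, dz \le \frac{C}{(1+|y|)^{\vartheta}}.$$ -/
open Real MeasureTheory Metric Set Pointwise

section aux

variable {N : ℕ}

local notation "EE" => EuclideanSpace ℝ (Fin N)

private lemma aux_meas {p : ℝ} : Measurable (fun z : EE => ‖z‖ ^ (-p)) := by fun_prop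

private lemma aux_calc {p : ℝ} {R : ℝ} (hR : 0 < R) (k : ℕ) :
    (R / 2 ^ (k + 1)) ^ (-p) * (R / 2 ^ k) ^ (N : ℕ) =
      (R ^ ((N : ℝ) - p) * 2 ^ p) * ((2 : ℝ) ^ (p - (N : ℝ))) ^ k := by
  have h2 : (0:ℝ) ≤ 2 := by norm_num
  have hdiv : ∀ (a : ℝ) (m : ℕ), (R / 2 ^ m) ^ a = R ^ a * (((2:ℝ) ^ a)⁻¹) ^ m := by
    intro a m
    rw [Real.div_rpow hR.le (by positivity), ← Real.rpow_natCast (2:ℝ) m,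
      ← Real.rpow_mul h2, mul_comm (m:ℝ) a, Real.rpow_mul h2, Real.rpow_natCast,
      div_eq_mul_inv, ← inv_pow]
  rw [← Real.rpow_natCast (R / 2 ^ k) N, hdiv, hdiv]
  have hC : (((2:ℝ) ^ (-p))⁻¹) = 2 ^ p := by rw [Real.rpow_neg h2, inv_inv]
  have hA : R ^ ((N:ℝ) - p) = R ^ (-p) * R ^ ((N:ℝ)) := by
    rw [← Real.rpow_add hR]; ring_nf
  have hB : (2:ℝ) ^ (p - (N:ℝ)) = 2 ^ p * (((2:ℝ) ^ ((N:ℝ)))⁻¹) := by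
    rw [sub_eq_add_neg, Real.rpow_add (by norm_num : (0:ℝ) < 2), Real.rpow_neg h2]
  rw [hC, hB, hA]
  ring

private lemma aux_int_ball (hN : 1 ≤ N) {p : ℝ} (hp : 0 < p) (hpN : p < N) {R : ℝ}
    (hR : 0 < R) :
    IntegrableOn (fun z : EE => ‖z‖ ^ (-p)) (ball (0 : EE) R) := by
  haveI : Nontrivial EE := Module.nontrivial_of_finrank_pos (R := ℝ)
    (by rw [finrank_euclideanSpace_fin]; omega)
  constructor
  · exact aux_meas.aestronglyMeasurable
  · rw [hasFiniteIntegral_iff_ofReal (ae_of_all _ fun z =>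
      Real.rpow_nonneg (norm_nonneg z) _)]
    set A : ℕ → Set EE := fun k => ball (0:EE) (R / 2 ^ k) \ ball (0:EE) (R / 2 ^ (k + 1))
      with hAdef
    have cover : ball (0:EE) R ⊆ {(0:EE)} ∪ ⋃ k, A k := by
      intro z hz
      rcases eq_or_ne z 0 with rfl | hz0
      · exact Or.inl rfl
      · refine Or.inr (mem_iUnion.2 ?_)
        have hz1 : 0 < ‖z‖ := norm_pos_iff.2 hz0
        have hex : ∃ k : ℕ, R / 2 ^ (k + 1) ≤ ‖z‖ := by
          obtain ⟨n, hn⟩ := pow_unbounded_of_one_lt (R / ‖z‖) (one_lt_two (α := ℝ))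
          refine ⟨n, ?_⟩
          rw [div_le_iff₀ (by positivity)]
          rw [div_lt_iff₀ hz1] at hn
          have h1 : (0:ℝ) < 2 ^ n := by positivity
          have h2 : (2:ℝ) ^ n ≤ 2 ^ (n+1) := by
            apply pow_le_pow_right₀ (by norm_num) (Nat.le_succ n)
          nlinarith [norm_nonneg z]
        classical
        refine ⟨Nat.find hex, ?_, by
          simp only [mem_ball_zero_iff, not_lt]
          exact Nat.find_spec hex⟩
        rw [mem_ball_zero_iff]
        rcases Nat.eq_zero_or_pos (Nat.find hex) with h0 | h0
        · rw [h0, pow_zero, div_one]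
          exact mem_ball_zero_iff.1 hz
        · have hmin := Nat.find_min hex (Nat.sub_lt h0 one_pos)
          push_neg at hmin
          have : Nat.find hex - 1 + 1 = Nat.find hex := Nat.succ_pred_eq_of_pos h0
          rwa [this] at hmin
    have B1 : volume (ball (0:EE) 1) < ⊤ := measure_ball_lt_top
    calc ∫⁻ z in ball (0:EE) R, ENNReal.ofReal (‖z‖ ^ (-p)) ∂volume
        ≤ ∫⁻ z in {(0:EE)} ∪ ⋃ k, A k, ENNReal.ofReal (‖z‖ ^ (-p)) ∂volume :=
          lintegral_mono_set cover
      _ ≤ (∫⁻ z in {(0:EE)}, ENNReal.ofReal (‖z‖ ^ (-p)) ∂volume)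
            + ∫⁻ z in ⋃ k, A k, ENNReal.ofReal (‖z‖ ^ (-p)) ∂volume :=
          lintegral_union_le _ _ _
      _ ≤ 0 + ∑' k, ∫⁻ z in A k, ENNReal.ofReal (‖z‖ ^ (-p)) ∂volume := by
          gcongr
          · rw [setLIntegral_measure_zero _ _ (measure_singleton _)]
          · exact lintegral_iUnion_le _ _
      _ ≤ ∑' k, (ENNReal.ofReal (R ^ ((N:ℝ) - p) * 2 ^ p) * volume (ball (0:EE) 1))
            * (ENNReal.ofReal ((2:ℝ) ^ (p - (N:ℝ)))) ^ k := by
          rw [zero_add]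
          refine ENNReal.tsum_le_tsum fun k => ?_
          have hk1 : (0:ℝ) < R / 2 ^ (k+1) := by positivity
          have step1 : ∫⁻ z in A k, ENNReal.ofReal (‖z‖ ^ (-p)) ∂volume
              ≤ ENNReal.ofReal ((R / 2 ^ (k+1)) ^ (-p)) * volume (A k) := by
            rw [← setLIntegral_const]
            refine setLIntegral_mono' (measurableSet_ball.diff measurableSet_ball)
              fun z hz => ?_
            refine ENNReal.ofReal_le_ofReal ?_
            have hz2 : R / 2 ^ (k+1) ≤ ‖z‖ := by
              have h := hz.2
              rw [mem_ball_zero_iff] at h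
              exact not_lt.1 h
            exact Real.rpow_le_rpow_of_nonpos hk1 hz2 (neg_nonpos.2 hp.le)
          have step2 : volume (A k)
              ≤ ENNReal.ofReal ((R / 2 ^ k) ^ (N:ℕ)) * volume (ball (0:EE) 1) := by
            refine le_trans (measure_mono diff_subset) ?_
            rw [Measure.addHaar_ball_of_pos volume (0:EE) (by positivity : (0:ℝ) < R / 2 ^ k),
              finrank_euclideanSpace_fin]
          calc ∫⁻ z in A k, ENNReal.ofReal (‖z‖ ^ (-p)) ∂volume
              ≤ ENNReal.ofReal ((R / 2 ^ (k+1)) ^ (-p))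
                * (ENNReal.ofReal ((R / 2 ^ k) ^ (N:ℕ)) * volume (ball (0:EE) 1)) := by
                refine le_trans step1 ?_
                exact mul_le_mul_right step2 _
            _ = (ENNReal.ofReal (R ^ ((N:ℝ) - p) * 2 ^ p) * volume (ball (0:EE) 1))
                * (ENNReal.ofReal ((2:ℝ) ^ (p - (N:ℝ)))) ^ k := by
                rw [← mul_assoc, ← ENNReal.ofReal_mul (Real.rpow_nonneg hk1.le _),
                  aux_calc hR k,
                  ENNReal.ofReal_mul (by positivity),
                  ← ENNReal.ofReal_pow (Real.rpow_nonneg (by norm_num) _)]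
                ring
      _ = (ENNReal.ofReal (R ^ ((N:ℝ) - p) * 2 ^ p) * volume (ball (0:EE) 1))
            * ∑' k, (ENNReal.ofReal ((2:ℝ) ^ (p - (N:ℝ)))) ^ k := ENNReal.tsum_mul_left
      _ < ⊤ := by
          rw [ENNReal.tsum_geometric]
          refine ENNReal.mul_lt_top (ENNReal.mul_lt_top ENNReal.ofReal_lt_top B1) ?_
          rw [ENNReal.inv_lt_top, tsub_pos_iff_lt]
          exact ENNReal.ofReal_lt_one.2
            (Real.rpow_lt_one_of_one_lt_of_neg one_lt_two (by linarith))

private lemma aux_int_compl (hN : 1 ≤ N) {q : ℝ} (hq : (N:ℝ) < q) {R : ℝ} (hR : 0 < R) :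
    IntegrableOn (fun z : EE => ‖z‖ ^ (-q)) (ball (0 : EE) R)ᶜ := by
  have hint : Integrable (fun z : EE => (1 + 1/R) ^ q * (1 + ‖z‖) ^ (-q)) volume := by
    refine Integrable.const_mul ?_ _
    have := integrable_one_add_norm (E := EE) (μ := volume)
      (r := q) (by rwa [finrank_euclideanSpace_fin])
    exact this
  refine Integrable.mono' hint.integrableOn aux_meas.aestronglyMeasurable.restrict ?_
  filter_upwards [ae_restrict_mem measurableSet_ball.compl] with z hz
  have hz1 : R ≤ ‖z‖ := by
    simpa [mem_ball_zero_iff, not_lt] using hz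
  have hz0 : 0 < ‖z‖ := lt_of_lt_of_le hR hz1
  have hc : (0:ℝ) < 1 + 1/R := by positivity
  rw [Real.norm_of_nonneg (Real.rpow_nonneg (norm_nonneg z) _)]
  have cancel : ((1:ℝ) + 1/R) ^ (-q) * (1 + 1/R) ^ q = 1 := by
    rw [← Real.rpow_add hc]; simp
  have key : 1 + ‖z‖ ≤ (1 + 1/R) * ‖z‖ := by
    have h1 : 1 ≤ ‖z‖ / R := (one_le_div hR).2 hz1
    have h2 : (1 + 1/R) * ‖z‖ = ‖z‖ + ‖z‖/R := by ring
    linarith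
  calc ‖z‖ ^ (-q) = ((1 + 1/R) * ‖z‖) ^ (-q) * (1 + 1/R) ^ q := by
        rw [Real.mul_rpow hc.le hz0.le]
        linear_combination ‖z‖ ^ (-q) * cancel.symm
    _ ≤ (1 + ‖z‖) ^ (-q) * (1 + 1/R) ^ q := by
        refine mul_le_mul_of_nonneg_right ?_ (Real.rpow_nonneg hc.le _)
        exact Real.rpow_le_rpow_of_nonpos (by positivity) key (neg_nonpos.2 (by linarith))
    _ = (1 + 1/R) ^ q * (1 + ‖z‖) ^ (-q) := mul_comm _ _

private lemma aux_scale_ball (p : ℝ) {R : ℝ} (hR : 0 < R) :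
    ∫ z in ball (0:EE) R, ‖z‖ ^ (-p) =
      R ^ ((N:ℝ) - p) * ∫ z in ball (0:EE) 1, ‖z‖ ^ (-p) := by
  have h := Measure.setIntegral_comp_smul_of_pos (volume : Measure EE)
      (fun z : EE => ‖z‖ ^ (-p)) (ball (0:EE) 1) hR
  rw [smul_ball hR.ne' (0:EE) 1, smul_zero, Real.norm_of_nonneg hR.le, mul_one] at h
  have h2 : ∀ x : EE, ‖R • x‖ ^ (-p) = R ^ (-p) * ‖x‖ ^ (-p) := fun x => by
    rw [norm_smul, Real.norm_of_nonneg hR.le, Real.mul_rpow hR.le (norm_nonneg x)]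
  simp_rw [h2] at h
  rw [integral_const_mul, finrank_euclideanSpace_fin, smul_eq_mul] at h
  have hRN : (0:ℝ) < R ^ (N:ℕ) := by positivity
  have h3 : (∫ z in ball (0:EE) R, ‖z‖ ^ (-p))
      = R ^ (N:ℕ) * (R ^ (-p) * ∫ z in ball (0:EE) 1, ‖z‖ ^ (-p)) := by
    rw [h, ← mul_assoc, mul_inv_cancel₀ hRN.ne', one_mul]
  rw [h3, ← Real.rpow_natCast R N, ← mul_assoc, ← Real.rpow_add hR, ← sub_eq_add_neg]

private lemma aux_scale_compl (p : ℝ) {R : ℝ} (hR : 0 < R) :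
    ∫ z in (ball (0:EE) R)ᶜ, ‖z‖ ^ (-p) =
      R ^ ((N:ℝ) - p) * ∫ z in (ball (0:EE) 1)ᶜ, ‖z‖ ^ (-p) := by
  have hset : R • (ball (0:EE) 1)ᶜ = (ball (0:EE) R)ᶜ := by
    ext z
    rw [mem_smul_set_iff_inv_smul_mem₀ hR.ne']
    simp only [mem_compl_iff, mem_ball_zero_iff, norm_smul, norm_inv,
      Real.norm_of_nonneg hR.le]
    constructor
    · intro h hlt
      exact h (by rw [inv_mul_lt_iff₀ hR, mul_one]; exact hlt)
    · intro h hlt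
      rw [inv_mul_lt_iff₀ hR, mul_one] at hlt
      exact h hlt
  have h := Measure.setIntegral_comp_smul_of_pos (volume : Measure EE)
      (fun z : EE => ‖z‖ ^ (-p)) (ball (0:EE) 1)ᶜ hR
  rw [hset] at h
  have h2 : ∀ x : EE, ‖R • x‖ ^ (-p) = R ^ (-p) * ‖x‖ ^ (-p) := fun x => by
    rw [norm_smul, Real.norm_of_nonneg hR.le, Real.mul_rpow hR.le (norm_nonneg x)]
  simp_rw [h2] at h
  rw [integral_const_mul, finrank_euclideanSpace_fin, smul_eq_mul] at h
  have hRN : (0:ℝ) < R ^ (N:ℕ) := by positivity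
  have h3 : (∫ z in (ball (0:EE) R)ᶜ, ‖z‖ ^ (-p))
      = R ^ (N:ℕ) * (R ^ (-p) * ∫ z in (ball (0:EE) 1)ᶜ, ‖z‖ ^ (-p)) := by
    rw [h, ← mul_assoc, mul_inv_cancel₀ hRN.ne', one_mul]
  rw [h3, ← Real.rpow_natCast R N, ← mul_assoc, ← Real.rpow_add hR, ← sub_eq_add_neg]

end aux

theorem stmt_1 (N : ℕ) (hN : 1 ≤ N) (s ϑ : ℝ) (hs : s ∈ Set.Ioo (0:ℝ) 1)
    (hϑ : 0 < ϑ) (hϑ' : ϑ < (N:ℝ) - 2 * s) :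
    ∃ C > 0, ∀ y : EuclideanSpace ℝ (Fin N),
      ∫ z : EuclideanSpace ℝ (Fin N),
          1 / (‖y - z‖ ^ ((N:ℝ) - 2 * s) * (1 + ‖z‖) ^ (2 * s + ϑ)) ≤
        C / (1 + ‖y‖) ^ ϑ := by
  obtain ⟨hs0, hs1⟩ := hs
  set α : ℝ := (N:ℝ) - 2 * s with hα
  set β : ℝ := 2 * s + ϑ with hβ
  have hα0 : 0 < α := lt_trans hϑ hϑ'
  have hαN : α < (N:ℝ) := by rw [hα]; linarith
  have hβ0 : 0 < β := by rw [hβ]; linarith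
  have hβN : β < (N:ℝ) := by rw [hβ]; linarith
  have hqN : (N:ℝ) < α + β := by rw [hα, hβ]; linarith
  set c1 : ℝ := ∫ z in ball (0:EuclideanSpace ℝ (Fin N)) 1, ‖z‖ ^ (-α) with hc1def
  set c2 : ℝ := ∫ z in ball (0:EuclideanSpace ℝ (Fin N)) 1, ‖z‖ ^ (-β) with hc2def
  set c3 : ℝ := ∫ z in (ball (0:EuclideanSpace ℝ (Fin N)) 1)ᶜ, ‖z‖ ^ (-(α+β)) with hc3def
  have hc1 : 0 ≤ c1 := setIntegral_nonneg measurableSet_ball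
    (fun z _ => Real.rpow_nonneg (norm_nonneg z) _)
  have hc2 : 0 ≤ c2 := setIntegral_nonneg measurableSet_ball
    (fun z _ => Real.rpow_nonneg (norm_nonneg z) _)
  have hc3 : 0 ≤ c3 := setIntegral_nonneg measurableSet_ball.compl
    (fun z _ => Real.rpow_nonneg (norm_nonneg z) _)
  set C : ℝ := 2^ϑ * c1 + 2^α * 3^((N:ℝ)-β) * c2 + 2^α * 3^(-ϑ) * c3 + 1 with hCdef
  have hC0 : 0 < C := by
    have p1 : (0:ℝ) ≤ 2^ϑ * c1 := mul_nonneg (Real.rpow_nonneg (by norm_num) _) hc1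
    have p2 : (0:ℝ) ≤ 2^α * 3^((N:ℝ)-β) * c2 :=
      mul_nonneg (mul_nonneg (Real.rpow_nonneg (by norm_num) _)
        (Real.rpow_nonneg (by norm_num) _)) hc2
    have p3 : (0:ℝ) ≤ 2^α * 3^(-ϑ) * c3 :=
      mul_nonneg (mul_nonneg (Real.rpow_nonneg (by norm_num) _)
        (Real.rpow_nonneg (by norm_num) _)) hc3
    rw [hCdef]; linarith
  refine ⟨C, hC0, fun y => ?_⟩
  set M : ℝ := 1 + ‖y‖ with hM
  have hM1 : 1 ≤ M := le_add_of_nonneg_right (norm_nonneg y)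
  have hM0 : 0 < M := lt_of_lt_of_le one_pos hM1
  set g1 : EuclideanSpace ℝ (Fin N) → ℝ := fun z =>
    (M/2) ^ (-β) * (ball (0:EuclideanSpace ℝ (Fin N)) (M/2)).indicator
      (fun w => ‖w‖ ^ (-α)) (z - y) with hg1def
  set g2 : EuclideanSpace ℝ (Fin N) → ℝ := fun z =>
    (M/2) ^ (-α) * (ball (0:EuclideanSpace ℝ (Fin N)) (3*M)).indicator
      (fun w => ‖w‖ ^ (-β)) z with hg2def
  set g3 : EuclideanSpace ℝ (Fin N) → ℝ := fun z =>
    2 ^ α * ((ball (0:EuclideanSpace ℝ (Fin N)) (3*M))ᶜ).indicator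
      (fun w => ‖w‖ ^ (-(α+β))) z with hg3def
  have hg1 : Integrable g1 volume := by
    refine Integrable.const_mul ?_ _
    exact ((aux_int_ball hN hα0 hαN (by positivity)).integrable_indicator
      measurableSet_ball).comp_sub_right y
  have hg2 : Integrable g2 volume := by
    refine Integrable.const_mul ?_ _
    exact (aux_int_ball hN hβ0 hβN (by positivity)).integrable_indicator measurableSet_ball
  have hg3 : Integrable g3 volume := by
    refine Integrable.const_mul ?_ _
    exact (aux_int_compl hN hqN (by positivity)).integrable_indicator measurableSet_ball.compl
  have h0 : ∀ᵐ z : EuclideanSpace ℝ (Fin N) ∂(volume), z ≠ 0 := by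
    haveI : Nontrivial (EuclideanSpace ℝ (Fin N)) := Module.nontrivial_of_finrank_pos (R := ℝ)
      (by rw [finrank_euclideanSpace_fin]; omega)
    rw [ae_iff]
    have hset : {z : EuclideanSpace ℝ (Fin N) | ¬ z ≠ 0} = {0} := by ext w; simp
    rw [hset]
    exact measure_singleton 0
  have hbound : ∀ᵐ z : EuclideanSpace ℝ (Fin N) ∂(volume),
      1 / (‖y - z‖ ^ α * (1 + ‖z‖) ^ β) ≤ g1 z + g2 z + g3 z := by
    filter_upwards [h0] with z hz
    have n1 : 0 ≤ g1 z := mul_nonneg (Real.rpow_nonneg (by positivity) _)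
      (Set.indicator_nonneg (fun w _ => Real.rpow_nonneg (norm_nonneg w) _) _)
    have n2 : 0 ≤ g2 z := mul_nonneg (Real.rpow_nonneg (by positivity) _)
      (Set.indicator_nonneg (fun w _ => Real.rpow_nonneg (norm_nonneg w) _) _)
    have n3 : 0 ≤ g3 z := mul_nonneg (Real.rpow_nonneg (by norm_num) _)
      (Set.indicator_nonneg (fun w _ => Real.rpow_nonneg (norm_nonneg w) _) _)
    have hf : 1 / (‖y - z‖ ^ α * (1 + ‖z‖) ^ β) = ‖y - z‖ ^ (-α) * (1 + ‖z‖) ^ (-β) := by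
      rw [Real.rpow_neg (norm_nonneg _), Real.rpow_neg (by positivity), one_div, mul_inv]
    rcases lt_or_ge ‖z - y‖ (M/2) with hcase | hcase
    · -- near the singularity
      have hmem : z - y ∈ ball (0:EuclideanSpace ℝ (Fin N)) (M/2) := by
        rwa [mem_ball_zero_iff]
      have hzy : ‖y‖ - ‖z - y‖ ≤ ‖z‖ := by
        have h := norm_sub_norm_le y z
        have h2 : ‖y - z‖ = ‖z - y‖ := norm_sub_rev y z
        linarith
      have hzlb : M/2 ≤ 1 + ‖z‖ := by rw [hM] at *; linarith
      have key : (1 + ‖z‖) ^ (-β) ≤ (M/2) ^ (-β) :=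
        Real.rpow_le_rpow_of_nonpos (by positivity) hzlb (neg_nonpos.2 hβ0.le)
      have hle : ‖y - z‖ ^ (-α) * (1 + ‖z‖) ^ (-β) ≤ (M/2) ^ (-β) * ‖z - y‖ ^ (-α) := by
        rw [norm_sub_rev y z, mul_comm]
        exact mul_le_mul_of_nonneg_right key (Real.rpow_nonneg (norm_nonneg _) _)
      have hg1z : g1 z = (M/2) ^ (-β) * ‖z - y‖ ^ (-α) := by
        rw [hg1def]; simp only [Set.indicator_of_mem hmem]
      rw [hf]
      rw [hg1z] at n1 ⊢
      linarith
    · rcases lt_or_ge ‖z‖ (3*M) with hz3 | hz3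
      · -- middle region
        have hyz : M/2 ≤ ‖y - z‖ := by rw [norm_sub_rev]; exact hcase
        have k1 : ‖y - z‖ ^ (-α) ≤ (M/2) ^ (-α) :=
          Real.rpow_le_rpow_of_nonpos (by positivity) hyz (neg_nonpos.2 hα0.le)
        have hz0 : 0 < ‖z‖ := norm_pos_iff.2 hz
        have k2 : (1 + ‖z‖) ^ (-β) ≤ ‖z‖ ^ (-β) :=
          Real.rpow_le_rpow_of_nonpos hz0 (by linarith) (neg_nonpos.2 hβ0.le)
        have hg2z : g2 z = (M/2) ^ (-α) * ‖z‖ ^ (-β) := by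
          rw [hg2def]; simp only [Set.indicator_of_mem (mem_ball_zero_iff.2 hz3)]
        rw [hf]
        have hle : ‖y - z‖ ^ (-α) * (1 + ‖z‖) ^ (-β) ≤ (M/2) ^ (-α) * ‖z‖ ^ (-β) :=
          mul_le_mul k1 k2 (Real.rpow_nonneg (by positivity) _)
            (Real.rpow_nonneg (by positivity) _)
        rw [hg2z] at n2 ⊢
        linarith
      · -- far region
        have hy : ‖y‖ ≤ M := by rw [hM]; linarith
        have hz0 : (0:ℝ) < ‖z‖ := by linarith
        have hyz : ‖z‖/2 ≤ ‖y - z‖ := by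
          have h1 : ‖z‖ - ‖y‖ ≤ ‖z - y‖ := norm_sub_norm_le z y
          have h2 : ‖y - z‖ = ‖z - y‖ := norm_sub_rev y z
          linarith
        have k1 : ‖y - z‖ ^ (-α) ≤ (‖z‖/2) ^ (-α) :=
          Real.rpow_le_rpow_of_nonpos (by positivity) hyz (neg_nonpos.2 hα0.le)
        have k1' : (‖z‖/2) ^ (-α) = 2 ^ α * ‖z‖ ^ (-α) := by
          rw [Real.div_rpow hz0.le (by norm_num), div_eq_mul_inv,
            Real.rpow_neg (by norm_num : (0:ℝ) ≤ 2), inv_inv, mul_comm]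
        have k2 : (1 + ‖z‖) ^ (-β) ≤ ‖z‖ ^ (-β) :=
          Real.rpow_le_rpow_of_nonpos hz0 (by linarith) (neg_nonpos.2 hβ0.le)
        have hmem : z ∈ (ball (0:EuclideanSpace ℝ (Fin N)) (3*M))ᶜ := by
          simp only [Set.mem_compl_iff, mem_ball_zero_iff, not_lt]
          exact hz3
        have hg3z : g3 z = 2 ^ α * ‖z‖ ^ (-(α+β)) := by
          rw [hg3def]; simp only [Set.indicator_of_mem hmem]
        rw [hf]
        have hle : ‖y - z‖ ^ (-α) * (1 + ‖z‖) ^ (-β) ≤ 2 ^ α * ‖z‖ ^ (-(α+β)) := by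
          calc ‖y - z‖ ^ (-α) * (1 + ‖z‖) ^ (-β)
              ≤ (2 ^ α * ‖z‖ ^ (-α)) * ‖z‖ ^ (-β) := by
                rw [← k1']
                exact mul_le_mul k1 k2 (Real.rpow_nonneg (by positivity) _)
                  (Real.rpow_nonneg (by positivity) _)
            _ = 2 ^ α * ‖z‖ ^ (-(α+β)) := by
                rw [mul_assoc, ← Real.rpow_add hz0]
                congr 1
                ring
        rw [hg3z] at n3 ⊢
        linarith
  have I1 : ∫ z : EuclideanSpace ℝ (Fin N), g1 z
      = (M/2) ^ (-β) * ((M/2) ^ ((N:ℝ)-α) * c1) := by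
    rw [hg1def]
    rw [integral_const_mul]
    rw [integral_sub_right_eq_self
      ((ball (0:EuclideanSpace ℝ (Fin N)) (M/2)).indicator (fun w => ‖w‖ ^ (-α))) y]
    rw [integral_indicator measurableSet_ball, aux_scale_ball α (by positivity)]
  have I2 : ∫ z : EuclideanSpace ℝ (Fin N), g2 z
      = (M/2) ^ (-α) * ((3*M) ^ ((N:ℝ)-β) * c2) := by
    rw [hg2def]
    rw [integral_const_mul, integral_indicator measurableSet_ball,
      aux_scale_ball β (by positivity)]
  have I3 : ∫ z : EuclideanSpace ℝ (Fin N), g3 z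
      = 2 ^ α * ((3*M) ^ ((N:ℝ)-(α+β)) * c3) := by
    rw [hg3def]
    rw [integral_const_mul, integral_indicator measurableSet_ball.compl,
      aux_scale_compl (α+β) (by positivity)]
  have hsplit2 : ∀ e : ℝ, (M/2) ^ e = M ^ e * 2 ^ (-e) := fun e => by
    rw [Real.div_rpow hM0.le (by norm_num), Real.rpow_neg (by norm_num : (0:ℝ) ≤ 2),
      div_eq_mul_inv]
  have hsplit3 : ∀ e : ℝ, (3*M) ^ e = 3 ^ e * M ^ e := fun e => by
    rw [Real.mul_rpow (by norm_num) hM0.le]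
  have T1 : (M/2) ^ (-β) * ((M/2) ^ ((N:ℝ)-α) * c1) = 2^ϑ * c1 * M ^ (-ϑ) := by
    have h : (M/2) ^ (-β) * (M/2) ^ ((N:ℝ)-α) = 2^ϑ * M ^ (-ϑ) := by
      rw [← Real.rpow_add (by positivity : (0:ℝ) < M/2),
        show -β + ((N:ℝ)-α) = -ϑ by rw [hα, hβ]; ring, hsplit2, neg_neg]
      ring
    linear_combination c1 * h
  have T2 : (M/2) ^ (-α) * ((3*M) ^ ((N:ℝ)-β) * c2) = 2^α * 3^((N:ℝ)-β) * c2 * M ^ (-ϑ) := by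
    have h : (M/2) ^ (-α) * (3*M) ^ ((N:ℝ)-β) = 2^α * 3^((N:ℝ)-β) * M ^ (-ϑ) := by
      rw [hsplit2, hsplit3, neg_neg]
      have hMM : M ^ (-α) * M ^ ((N:ℝ)-β) = M ^ (-ϑ) := by
        rw [← Real.rpow_add hM0]
        congr 1
        rw [hα, hβ]; ring
      linear_combination 2 ^ α * 3 ^ ((N:ℝ)-β) * hMM
    linear_combination c2 * h
  have T3 : 2 ^ α * ((3*M) ^ ((N:ℝ)-(α+β)) * c3) = 2^α * 3^(-ϑ) * c3 * M ^ (-ϑ) := by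
    have h : (3*M) ^ ((N:ℝ)-(α+β)) = 3^(-ϑ) * M ^ (-ϑ) := by
      rw [show (N:ℝ)-(α+β) = -ϑ by rw [hα, hβ]; ring, hsplit3]
    linear_combination 2 ^ α * c3 * h
  calc ∫ z : EuclideanSpace ℝ (Fin N), 1 / (‖y - z‖ ^ α * (1 + ‖z‖) ^ β)
      ≤ ∫ z : EuclideanSpace ℝ (Fin N), (g1 z + g2 z + g3 z) :=
        integral_mono_of_nonneg (Filter.Eventually.of_forall fun z => by positivity)
          ((hg1.add hg2).add hg3) hbound
    _ = (∫ z : EuclideanSpace ℝ (Fin N), g1 z) + (∫ z : EuclideanSpace ℝ (Fin N), g2 z)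
          + ∫ z : EuclideanSpace ℝ (Fin N), g3 z := by
        rw [integral_add (f := fun z => g1 z + g2 z) (hg1.add hg2) hg3,
          integral_add hg1 hg2]
    _ = (2^ϑ * c1 + 2^α * 3^((N:ℝ)-β) * c2 + 2^α * 3^(-ϑ) * c3) * M ^ (-ϑ) := by
        rw [I1, I2, I3, T1, T2, T3]; ring
    _ ≤ C * M ^ (-ϑ) := by
        refine mul_le_mul_of_nonneg_right ?_ (Real.rpow_nonneg hM0.le _)
        rw [hCdef]; linarith
    _ = C / M ^ ϑ := by
        rw [Real.rpow_neg hM0.le, div_eq_mul_inv]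
end

section
/- Let $N \ge 1$, $\rho > 0$, $\alpha > N$ and $0 < \beta < N$. Suppose $y, x \in \mathbb{R}^N$ and $t > 0$ satisfy $|y-x|^2 + t^2 = \rho^2$. Then there exists a constant $C>0$ (depending on $N,\alpha,\beta,\rho$ but not on $y,x,t$) such that $$\int_{\mathbb{R}^N} \frac{1}{(t+|z|)^{\alpha}} \cdot \frac{1}{|y-z-x|^{\beta}}\, dz \le C\Big(\frac{1}{(1+|y-x|)^{\beta}}\cdot\frac{1}{t^{\alpha-N}} + \frac{1}{(1+|y-x|)^{\alpha+\beta-N}}\Big).$$ -/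
/-! Put `w = y - x`. On the sphere `‖w‖² + t² = ρ²` we have `ρ ≤ t + ‖w‖`, so where
`‖z - w‖ ≤ ρ / 2` the weight `(t + ‖z‖) ^ (-α)` is at most `(ρ / 2) ^ (-α)`, and elsewhere
`‖w - z‖ ^ (-β) ≤ (ρ / 2) ^ (-β)`. The first region contributes a constant, because `‖u‖ ^ (-β)` is
locally integrable for `β < N`; the second contributes `(ρ / 2) ^ (-β) ∫ (t + ‖z‖) ^ (-α)`, which
scales like `t ^ (N - α)`. As `t ≤ ρ` and `‖w‖ ≤ ρ`, both are `O(t ^ (N - α) (1 + ‖w‖) ^ (-β))`. -/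

open Real MeasureTheory Metric Set Filter Module

section

variable {E : Type*} [NormedAddCommGroup E]

lemma add_norm_rpow_neg_mul_norm_sub_rpow_neg_le {α β ρ t : ℝ} (hα : 0 ≤ α) (hβ : 0 ≤ β)
    (hρ : 0 < ρ) (ht : 0 ≤ t) {w : E} (hρtw : ρ ≤ t + ‖w‖) (z : E) :
    (t + ‖z‖) ^ (-α) * ‖w - z‖ ^ (-β) ≤
      (ρ / 2) ^ (-α) * (closedBall (0 : E) (ρ / 2)).indicator (fun u => ‖u‖ ^ (-β)) (z - w) +
        (ρ / 2) ^ (-β) * (t + ‖z‖) ^ (-α) := by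
  rw [norm_sub_rev]
  have hw : ‖w‖ ≤ ‖z‖ + ‖z - w‖ := by
    simpa [norm_sub_rev] using norm_le_norm_add_norm_sub' w z
  by_cases hzw : z - w ∈ closedBall (0 : E) (ρ / 2)
  · rw [mem_closedBall_zero_iff] at hzw
    rw [indicator_of_mem (mem_closedBall_zero_iff.2 hzw)]
    have : (t + ‖z‖) ^ (-α) ≤ (ρ / 2) ^ (-α) :=
      rpow_le_rpow_of_nonpos (by positivity) (by linarith) (by linarith)
    calc (t + ‖z‖) ^ (-α) * ‖z - w‖ ^ (-β) ≤ (ρ / 2) ^ (-α) * ‖z - w‖ ^ (-β) :=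
          mul_le_mul_of_nonneg_right this (by positivity)
      _ ≤ _ := le_add_of_nonneg_right (by positivity)
  · rw [mem_closedBall_zero_iff, not_le] at hzw
    rw [indicator_of_notMem (by simpa using hzw), mul_zero, zero_add, mul_comm]
    exact mul_le_mul_of_nonneg_right
      (rpow_le_rpow_of_nonpos (by positivity) hzw.le (by linarith)) (by positivity)

variable [NormedSpace ℝ E]

lemma add_norm_rpow_neg_eq (α : ℝ) {t : ℝ} (ht : 0 < t) (z : E) :
    (t + ‖z‖) ^ (-α) = t ^ (-α) * (1 + ‖t⁻¹ • z‖) ^ (-α) := by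
  rw [← mul_rpow ht.le (by positivity), norm_smul, norm_inv, norm_of_nonneg ht.le,
    mul_add, mul_one, mul_inv_cancel_left₀ ht.ne']

variable [FiniteDimensional ℝ E] [MeasurableSpace E] [BorelSpace E] {μ : Measure E}
  [μ.IsAddHaarMeasure]

lemma integrable_add_norm_rpow_neg {t α : ℝ} (ht : 0 < t) (hα : (finrank ℝ E : ℝ) < α) :
    Integrable (fun z : E => (t + ‖z‖) ^ (-α)) μ := by
  simp_rw [add_norm_rpow_neg_eq α ht]
  exact ((integrable_one_add_norm hα).comp_smul (inv_ne_zero ht.ne')).const_mul _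

lemma integral_add_norm_rpow_neg {t : ℝ} (α : ℝ) (ht : 0 < t) :
    ∫ z, (t + ‖z‖) ^ (-α) ∂μ = t ^ ((finrank ℝ E : ℝ) - α) * ∫ z, (1 + ‖z‖) ^ (-α) ∂μ := by
  simp_rw [add_norm_rpow_neg_eq α ht]
  rw [integral_const_mul, Measure.integral_comp_inv_smul_of_nonneg μ (fun z => (1 + ‖z‖) ^ (-α))
    ht.le, smul_eq_mul, ← mul_assoc, ← rpow_natCast, ← rpow_add ht, neg_add_eq_sub]

lemma integrableOn_closedBall_norm_rpow_neg (hd : 1 ≤ finrank ℝ E) {β : ℝ}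
    (hβ : β < finrank ℝ E) (r : ℝ) :
    IntegrableOn (fun u : E => ‖u‖ ^ (-β)) (closedBall 0 r) μ := by
  have hmeas : Measurable fun u : E => ‖u‖ ^ (-β) := by fun_prop
  refine (locallyIntegrable_of_norm_le_rpow hd (C := 1) hβ (Eventually.of_forall fun u => ?_)
    hmeas.aestronglyMeasurable).integrableOn_isCompact (isCompact_closedBall 0 r)
  rw [one_mul, norm_of_nonneg (by positivity)]

lemma integral_add_norm_rpow_neg_mul_norm_sub_rpow_neg_le (hd : 1 ≤ finrank ℝ E) {α β ρ t : ℝ}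
    (hα : (finrank ℝ E : ℝ) < α) (hβ0 : 0 ≤ β) (hβ : β < finrank ℝ E) (hρ : 0 < ρ) (ht : 0 < t)
    {w : E} (hρtw : ρ ≤ t + ‖w‖) :
    ∫ z, (t + ‖z‖) ^ (-α) * ‖w - z‖ ^ (-β) ∂μ ≤
      (ρ / 2) ^ (-α) * ∫ u in closedBall (0 : E) (ρ / 2), ‖u‖ ^ (-β) ∂μ +
        (ρ / 2) ^ (-β) * (∫ z, (1 + ‖z‖) ^ (-α) ∂μ) * t ^ ((finrank ℝ E : ℝ) - α) := by
  have hα0 : 0 ≤ α := (Nat.cast_nonneg _).trans hα.le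
  have hnear : Integrable (fun z => (closedBall (0 : E) (ρ / 2)).indicator
      (fun u => ‖u‖ ^ (-β)) (z - w)) μ :=
    ((integrable_indicator_iff measurableSet_closedBall).2
      (integrableOn_closedBall_norm_rpow_neg hd hβ _)).comp_sub_right w
  have hfar : Integrable (fun z : E => (t + ‖z‖) ^ (-α)) μ := integrable_add_norm_rpow_neg ht hα
  calc ∫ z, (t + ‖z‖) ^ (-α) * ‖w - z‖ ^ (-β) ∂μ
      ≤ ∫ z, (ρ / 2) ^ (-α) * (closedBall (0 : E) (ρ / 2)).indicator (fun u => ‖u‖ ^ (-β)) (z - w) +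
          (ρ / 2) ^ (-β) * (t + ‖z‖) ^ (-α) ∂μ :=
        integral_mono_of_nonneg (Eventually.of_forall fun z => by positivity)
          ((hnear.const_mul _).add (hfar.const_mul _)) (Eventually.of_forall
            (add_norm_rpow_neg_mul_norm_sub_rpow_neg_le hα0 hβ0 hρ ht.le hρtw))
    _ = _ := by
        rw [integral_add (hnear.const_mul _) (hfar.const_mul _), integral_const_mul,
          integral_const_mul, integral_sub_right_eq_self
            (fun u => (closedBall (0 : E) (ρ / 2)).indicator (fun u => ‖u‖ ^ (-β)) u),
          integral_indicator measurableSet_closedBall, integral_add_norm_rpow_neg α ht]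
        ring

lemma exists_integral_add_norm_rpow_neg_mul_norm_sub_rpow_neg_le (hd : 1 ≤ finrank ℝ E)
    {α β ρ : ℝ} (hα : (finrank ℝ E : ℝ) < α) (hβ0 : 0 ≤ β) (hβ : β < finrank ℝ E) (hρ : 0 < ρ) :
    ∃ D > 0, ∀ (w : E) (t : ℝ), 0 < t → t ≤ ρ → ρ ≤ t + ‖w‖ →
      ∫ z, (t + ‖z‖) ^ (-α) * ‖w - z‖ ^ (-β) ∂μ ≤ D * t ^ ((finrank ℝ E : ℝ) - α) := by
  set A := (ρ / 2) ^ (-α) * ∫ u in closedBall (0 : E) (ρ / 2), ‖u‖ ^ (-β) ∂μ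
  set B := (ρ / 2) ^ (-β) * ∫ z, (1 + ‖z‖) ^ (-α) ∂μ
  have hA : 0 ≤ A := by
    have : 0 ≤ ∫ u in closedBall (0 : E) (ρ / 2), ‖u‖ ^ (-β) ∂μ :=
      setIntegral_nonneg measurableSet_closedBall fun u _ => by positivity
    positivity
  have hB : 0 < B := by
    have : 0 < ∫ z, (1 + ‖z‖) ^ (-α) ∂μ :=
      (integral_pos_iff_support_of_nonneg (fun z => by positivity)
        (integrable_one_add_norm hα)).2 (by
          rw [Function.support_eq_univ fun z => (rpow_pos_of_pos (by positivity) _).ne']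
          exact Measure.measure_univ_pos.2 (NeZero.ne μ))
    positivity
  refine ⟨A * ρ ^ (α - finrank ℝ E) + B, by positivity, fun w t ht htρ hρtw => ?_⟩
  have hρt : ρ ^ ((finrank ℝ E : ℝ) - α) ≤ t ^ ((finrank ℝ E : ℝ) - α) :=
    rpow_le_rpow_of_nonpos ht htρ (by linarith)
  have hρρ : ρ ^ (α - finrank ℝ E) * ρ ^ ((finrank ℝ E : ℝ) - α) = 1 := by
    rw [← rpow_add hρ]; simp
  calc ∫ z, (t + ‖z‖) ^ (-α) * ‖w - z‖ ^ (-β) ∂μ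
      ≤ A + B * t ^ ((finrank ℝ E : ℝ) - α) :=
        integral_add_norm_rpow_neg_mul_norm_sub_rpow_neg_le hd hα hβ0 hβ hρ ht hρtw
    _ ≤ (A * ρ ^ (α - finrank ℝ E) + B) * t ^ ((finrank ℝ E : ℝ) - α) := by
        nlinarith [mul_le_mul_of_nonneg_left hρt (by positivity : 0 ≤ A * ρ ^ (α - finrank ℝ E))]

end

theorem stmt_3 (N : ℕ) (hN : 1 ≤ N) (ρ α β : ℝ) (hρ : 0 < ρ)
    (hα : (N:ℝ) < α) (hβ0 : 0 < β) (hβ : β < (N:ℝ)) :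
    ∃ C > 0, ∀ (y x : EuclideanSpace ℝ (Fin N)) (t : ℝ), 0 < t →
      ‖y - x‖ ^ 2 + t ^ 2 = ρ ^ 2 →
      ∫ z : EuclideanSpace ℝ (Fin N),
          1 / ((t + ‖z‖) ^ α * ‖y - z - x‖ ^ β) ≤
        C * (1 / (1 + ‖y - x‖) ^ β * (1 / t ^ (α - (N:ℝ))) +
          1 / (1 + ‖y - x‖) ^ (α + β - (N:ℝ))) := by
  obtain ⟨D, hD, hbound⟩ :=
    exists_integral_add_norm_rpow_neg_mul_norm_sub_rpow_neg_le (μ := volume)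
      (E := EuclideanSpace ℝ (Fin N)) (by simpa using hN) (by simpa using hα) hβ0.le
      (by simpa using hβ) hρ
  refine ⟨(1 + ρ) ^ β * D, by positivity, fun y x t ht hsphere => ?_⟩
  have hwρ : ‖y - x‖ ≤ ρ := by nlinarith [norm_nonneg (y - x)]
  have htρ : t ≤ ρ := by nlinarith [norm_nonneg (y - x)]
  have hρtw : ρ ≤ t + ‖y - x‖ := by nlinarith [norm_nonneg (y - x)]
  have hintegrand : ∀ z : EuclideanSpace ℝ (Fin N), 1 / ((t + ‖z‖) ^ α * ‖y - z - x‖ ^ β) =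
      (t + ‖z‖) ^ (-α) * ‖(y - x) - z‖ ^ (-β) := fun z => by
    rw [sub_right_comm, rpow_neg (by positivity), rpow_neg (norm_nonneg _), one_div, mul_inv]
  have hweight : 1 ≤ (1 + ρ) ^ β * (1 / (1 + ‖y - x‖) ^ β) := by
    rw [mul_one_div, one_le_div (by positivity)]
    exact rpow_le_rpow (by positivity) (by linarith) hβ0.le
  have htpow : t ^ ((N : ℝ) - α) = 1 / t ^ (α - N) := by
    rw [one_div, ← rpow_neg ht.le, neg_sub]
  simp_rw [hintegrand]
  calc ∫ z, (t + ‖z‖) ^ (-α) * ‖(y - x) - z‖ ^ (-β)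
      ≤ D * t ^ ((N : ℝ) - α) := by simpa using hbound (y - x) t ht htρ hρtw
    _ ≤ (1 + ρ) ^ β * D * (1 / (1 + ‖y - x‖) ^ β * (1 / t ^ (α - N))) := by
        rw [htpow]
        nlinarith [mul_le_mul_of_nonneg_right hweight (by positivity : 0 ≤ D * (1 / t ^ (α - N)))]
    _ ≤ _ := mul_le_mul_of_nonneg_left (le_add_of_nonneg_right (by positivity)) (by positivity)
end
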